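/- Let n be a natural number. The homomorphism Aut_S(A_n) → S_n obtained by composing the projection (f, F) ↦ F with the canonical epimorphism Aut(W_n) → S_n (whose kernel is FR(W_n)) is surjective, admits a group-theoretic section given by σ ↦ (restriction of α_σ to A_n, ᾱ_σ) where ᾱ_σ(x̄_i) = x̄_{σ(i)}, and its kernel is exactly { (f, F) : f ∈ Aut_W(A_n), F ∈ FR(W_n) } ≅ Aut_W(A_n) × FR(W_n). Thus there is a split short exact sequence 1 → Aut_W(A_n) × FR(W_n) → Aut_S(A_n) → S_n → 1. -/
import Mathlib



def HWrels (n : ℕ) : Set (FreeGroup (Fin n)) :=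
  {r | ∃ i j : Fin n, i ≠ j ∧
    r = (FreeGroup.of i)⁻¹ * FreeGroup.of j ^ 2 * FreeGroup.of i * FreeGroup.of j ^ 2}

abbrev HW (n : ℕ) : Type := PresentedGroup (HWrels n)

def x (n : ℕ) (i : Fin n) : HW n := PresentedGroup.of i

def A (n : ℕ) : Subgroup (HW n) := Subgroup.closure (Set.range fun i => x n i ^ 2)

theorem HW.relation (n : ℕ) {i j : Fin n} (h : i ≠ j) :
    (x n i)⁻¹ * x n j ^ 2 * x n i * x n j ^ 2 = 1 := by
  have hr : ((FreeGroup.of i)⁻¹ * FreeGroup.of j ^ 2 * FreeGroup.of i * FreeGroup.of j ^ 2)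
      ∈ HWrels n := ⟨i, j, h, rfl⟩
  have h2 : PresentedGroup.mk (HWrels n)
      ((FreeGroup.of i)⁻¹ * FreeGroup.of j ^ 2 * FreeGroup.of i * FreeGroup.of j ^ 2) = 1 :=
    (QuotientGroup.eq_one_iff _).mpr (Subgroup.subset_normalClosure hr)
  rw [map_mul, map_mul, map_mul, map_inv, map_pow] at h2
  exact h2

theorem HW.conj_sq_mem (n : ℕ) (k j : Fin n) :
    x n k * x n j ^ 2 * (x n k)⁻¹ ∈ A n ∧ (x n k)⁻¹ * x n j ^ 2 * x n k ∈ A n := by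
  have hj : x n j ^ 2 ∈ A n := Subgroup.subset_closure ⟨j, rfl⟩
  by_cases h : k = j
  · subst h
    have e1 : x n k * x n k ^ 2 * (x n k)⁻¹ = x n k ^ 2 := by group
    have e2 : (x n k)⁻¹ * x n k ^ 2 * x n k = x n k ^ 2 := by group
    rw [e1, e2]; exact ⟨hj, hj⟩
  · have hrel := HW.relation n h
    have e2 : (x n k)⁻¹ * x n j ^ 2 * x n k = (x n j ^ 2)⁻¹ :=
      mul_eq_one_iff_eq_inv.mp hrel
    have h3 : x n j ^ 2 = x n k * (x n j ^ 2)⁻¹ * (x n k)⁻¹ := by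
      rw [← e2]; group
    have e1 : x n k * x n j ^ 2 * (x n k)⁻¹ = (x n j ^ 2)⁻¹ := by
      calc x n k * x n j ^ 2 * (x n k)⁻¹
          = (x n k * (x n j ^ 2)⁻¹ * (x n k)⁻¹)⁻¹ := by group
        _ = (x n j ^ 2)⁻¹ := by rw [← h3]
    rw [e1, e2]
    exact ⟨Subgroup.inv_mem _ hj, Subgroup.inv_mem _ hj⟩

instance A_normal (n : ℕ) : (A n).Normal := by
  let K : Subgroup (HW n) :=
    { carrier := {g | (∀ a ∈ A n, g * a * g⁻¹ ∈ A n) ∧ (∀ a ∈ A n, g⁻¹ * a * g ∈ A n)}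
      one_mem' := by simp
      mul_mem' := by
        rintro g h ⟨hg1, hg2⟩ ⟨hh1, hh2⟩
        constructor
        · intro a ha
          have := hg1 _ (hh1 a ha)
          have e : g * (h * a * h⁻¹) * g⁻¹ = g * h * a * (g * h)⁻¹ := by group
          rwa [e] at this
        · intro a ha
          have := hh2 _ (hg2 a ha)
          have e : h⁻¹ * (g⁻¹ * a * g) * h = (g * h)⁻¹ * a * (g * h) := by group
          rwa [e] at this
      inv_mem' := by
        rintro g ⟨hg1, hg2⟩
        constructor
        · intro a ha
          have := hg2 a ha
          have e : g⁻¹ * a * g = g⁻¹ * a * g⁻¹⁻¹ := by group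
          rwa [e] at this
        · intro a ha
          have := hg1 a ha
          have e : g * a * g⁻¹ = g⁻¹⁻¹ * a * g⁻¹ := by group
          rwa [e] at this }
  have hgen : ∀ j : Fin n, PresentedGroup.of (rels := HWrels n) j ∈ K := by
    intro j
    show (∀ a ∈ A n, x n j * a * (x n j)⁻¹ ∈ A n) ∧ (∀ a ∈ A n, (x n j)⁻¹ * a * x n j ∈ A n)
    constructor
    · intro a ha
      refine Subgroup.closure_induction ?_ ?_ ?_ ?_ ha
      · rintro b ⟨i, rfl⟩
        exact (HW.conj_sq_mem n j i).1
      · simpa using Subgroup.one_mem (A n)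
      · intro b c _ _ hb hc
        have e : x n j * (b * c) * (x n j)⁻¹
            = (x n j * b * (x n j)⁻¹) * (x n j * c * (x n j)⁻¹) := by group
        rw [e]; exact Subgroup.mul_mem _ hb hc
      · intro b _ hb
        have e : x n j * b⁻¹ * (x n j)⁻¹ = (x n j * b * (x n j)⁻¹)⁻¹ := by group
        rw [e]; exact Subgroup.inv_mem _ hb
    · intro a ha
      refine Subgroup.closure_induction ?_ ?_ ?_ ?_ ha
      · rintro b ⟨i, rfl⟩
        exact (HW.conj_sq_mem n j i).2
      · simpa using Subgroup.one_mem (A n)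
      · intro b c _ _ hb hc
        have e : (x n j)⁻¹ * (b * c) * x n j
            = ((x n j)⁻¹ * b * x n j) * ((x n j)⁻¹ * c * x n j) := by group
        rw [e]; exact Subgroup.mul_mem _ hb hc
      · intro b _ hb
        have e : (x n j)⁻¹ * b⁻¹ * x n j = ((x n j)⁻¹ * b * x n j)⁻¹ := by group
        rw [e]; exact Subgroup.inv_mem _ hb
  constructor
  intro a ha g
  exact ((PresentedGroup.generated_by (HWrels n) K hgen g).1) a ha

theorem A_comm (n : ℕ) : ∀ a ∈ A n, ∀ b ∈ A n, Commute a b := by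
  have gen : ∀ i j : Fin n, Commute (x n i ^ 2) (x n j ^ 2) := by
    intro i j
    by_cases h : i = j
    · subst h; exact Commute.refl _
    · have e2 : (x n i)⁻¹ * x n j ^ 2 * x n i = (x n j ^ 2)⁻¹ :=
        mul_eq_one_iff_eq_inv.mp (HW.relation n h)
      have h4 : ((x n i)⁻¹ * x n j ^ 2 * x n i)⁻¹ = x n j ^ 2 := by
        rw [e2, inv_inv]
      have e2' : (x n i)⁻¹ * (x n j ^ 2)⁻¹ * x n i = x n j ^ 2 := by
        conv_rhs => rw [← h4]
        group
      have key : (x n i ^ 2)⁻¹ * x n j ^ 2 * x n i ^ 2 = x n j ^ 2 := by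
        have step1 : (x n i ^ 2)⁻¹ * x n j ^ 2 * x n i ^ 2
            = (x n i)⁻¹ * ((x n i)⁻¹ * x n j ^ 2 * x n i) * x n i := by
          rw [pow_two (x n i)]; group
        rw [step1, e2]
        exact e2'
      have comm : x n j ^ 2 * x n i ^ 2 = x n i ^ 2 * x n j ^ 2 := by
        have step2 : x n j ^ 2 * x n i ^ 2
            = x n i ^ 2 * ((x n i ^ 2)⁻¹ * x n j ^ 2 * x n i ^ 2) := by group
        rw [step2, key]
      exact Commute.symm comm
  intro a ha
  refine Subgroup.closure_induction ?_ ?_ ?_ ?_ ha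
  · rintro b ⟨i, rfl⟩
    intro c hc
    have inner : ∀ d ∈ A n, Commute d (x n i ^ 2) := by
      intro d hd
      refine Subgroup.closure_induction ?_ ?_ ?_ ?_ hd
      · rintro e ⟨j, rfl⟩; exact gen j i
      · exact Commute.one_left _
      · intro e f _ _ he hf; exact he.mul_left hf
      · intro e _ he; exact he.inv_left
    exact (inner c hc).symm
  · intro b _; exact Commute.one_left _
  · intro b c _ _ hb hc d hd; exact (hb d hd).mul_left (hc d hd)
  · intro b _ hb d hd; exact (hb d hd).inv_left

/-- The quotient `W_n = G_n / A_n`. -/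
abbrev Wq (n : ℕ) : Type := HW n ⧸ A n

/-- The generators `x̄_i` of `W_n = G_n/A_n`. -/
def xq (n : ℕ) (i : Fin n) : Wq n := QuotientGroup.mk (x n i)

/-- `x_i²` as an element of `A_n`. -/
def xsq (n : ℕ) (i : Fin n) : ↥(A n) :=
  ⟨x n i ^ 2, Subgroup.subset_closure ⟨i, rfl⟩⟩

/-- The action of `w ∈ G_n` on `A_n` by conjugation, `w · a = w a w⁻¹`
(it factors through `W_n = G_n/A_n`). -/
def conjA (n : ℕ) (g : HW n) (a : ↥(A n)) : ↥(A n) :=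
  ⟨g * a * g⁻¹, (A_normal n).conj_mem a.1 a.2 g⟩

/-- A pair `(f, F) ∈ Aut(A_n) × Aut(W_n)` is semi-linear if `f(w̄ · a) = F(w̄) · f(a)`
for all `a ∈ A_n`, `w̄ ∈ W_n`, where the `W_n`-action on `A_n` is by conjugation. -/
def IsSemilinear (n : ℕ) (p : MulAut ↥(A n) × MulAut (Wq n)) : Prop :=
  ∀ (g g' : HW n) (a : ↥(A n)),
    (QuotientGroup.mk g' : Wq n) = p.2 (QuotientGroup.mk g) →
    p.1 (conjA n g a) = conjA n g' (p.1 a)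

/-- The group `Aut_S(A_n)` of semi-linear automorphisms of the `W_n`-module `A_n`. -/
def AutS (n : ℕ) : Subgroup (MulAut ↥(A n) × MulAut (Wq n)) where
  carrier := {p | IsSemilinear n p}
  one_mem' := by
    intro g g' a h
    simp only [Prod.snd_one, MulAut.one_apply] at h
    have hb : g'⁻¹ * g ∈ A n := QuotientGroup.eq.mp h
    show conjA n g a = conjA n g' a
    apply Subtype.ext
    show g * a * g⁻¹ = g' * a * g'⁻¹
    have hcomm : Commute (g'⁻¹ * g) a.1 := A_comm n _ hb a.1 a.2
    have hfix : g'⁻¹ * g * a.1 * (g'⁻¹ * g)⁻¹ = a.1 := by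
      rw [hcomm.eq]; group
    calc g * a.1 * g⁻¹
        = g' * (g'⁻¹ * g * a.1 * (g'⁻¹ * g)⁻¹) * g'⁻¹ := by group
      _ = g' * a.1 * g'⁻¹ := by rw [hfix]
  mul_mem' := by
    intro p q hp hq g g' a h
    obtain ⟨g2, hg2⟩ := QuotientGroup.mk_surjective (q.2 (QuotientGroup.mk g))
    have h1 := hq g g2 a hg2
    simp only [Prod.snd_mul, MulAut.mul_apply] at h
    have h2 := hp g2 g' (q.1 a) (by rw [h, hg2])
    show p.1 (q.1 (conjA n g a)) = conjA n g' (p.1 (q.1 a))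
    rw [h1, h2]
  inv_mem' := by
    intro p hp g g' a h
    simp only [Prod.snd_inv] at h
    have h2 : (QuotientGroup.mk g : Wq n) = p.2 (QuotientGroup.mk g') := by
      rw [h, MulAut.apply_inv_self]
    have h3 := hp g' g (p.1⁻¹ a) h2
    rw [MulAut.apply_inv_self] at h3
    show p.1⁻¹ (conjA n g a) = conjA n g' (p.1⁻¹ a)
    apply p.1.injective
    rw [MulAut.apply_inv_self, h3]

/-- An automorphism `f` of `A_n` is `W_n`-equivariant if `f(w̄ · a) = w̄ · f(a)`. -/
def IsEquivariant (n : ℕ) (f : MulAut ↥(A n)) : Prop :=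
  ∀ (g : HW n) (a : ↥(A n)), f (conjA n g a) = conjA n g (f a)

/-- The group `Aut_W(A_n)` of `W_n`-equivariant automorphisms of `A_n`. -/
def AutW (n : ℕ) : Subgroup (MulAut ↥(A n)) where
  carrier := {f | IsEquivariant n f}
  one_mem' := by intro g a; rfl
  mul_mem' := by
    intro f g hf hg w a
    exact (congrArg f (hg w a)).trans (hf w (g a))
  inv_mem' := by
    intro f hf g a
    apply f.injective
    rw [MulAut.apply_inv_self, hf g (f⁻¹ a), MulAut.apply_inv_self]

/-- The projection `Aut_S(A_n) → Aut(W_n)`, `(f, F) ↦ F`. -/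
def projW (n : ℕ) : AutS n →* MulAut (Wq n) :=
  (MonoidHom.snd _ _).comp (AutS n).subtype
/-- The Fouxe-Rabinovitch generators of `Aut(W_n)`: automorphisms `ᾱ_i^j` with
`ᾱ_i^j(x̄_i) = x̄_j x̄_i x̄_j⁻¹` and `ᾱ_i^j(x̄_k) = x̄_k` for `k ≠ i`. -/
def FRgens (n : ℕ) : Set (MulAut (Wq n)) :=
  {F | ∃ i j : Fin n, i ≠ j ∧
    F (xq n i) = xq n j * xq n i * (xq n j)⁻¹ ∧
    ∀ k, k ≠ i → F (xq n k) = xq n k}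

/-- The Fouxe-Rabinovitch subgroup `FR(W_n) ≤ Aut(W_n)`. -/
def FR (n : ℕ) : Subgroup (MulAut (Wq n)) := Subgroup.closure (FRgens n)

/-! ### Auxiliary lemmas -/

theorem conjA_one (n : ℕ) (a : ↥(A n)) : conjA n 1 a = a := by
  apply Subtype.ext; show 1 * a.1 * 1⁻¹ = a.1; group

theorem conjA_mul (n : ℕ) (g h : HW n) (a : ↥(A n)) :
    conjA n (g * h) a = conjA n g (conjA n h a) := by
  apply Subtype.ext; show (g * h) * a.1 * (g * h)⁻¹ = g * (h * a.1 * h⁻¹) * g⁻¹; group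

theorem conjA_inv_conjA (n : ℕ) (g : HW n) (a : ↥(A n)) :
    conjA n g⁻¹ (conjA n g a) = a := by
  apply Subtype.ext; show g⁻¹ * (g * a.1 * g⁻¹) * g⁻¹⁻¹ = a.1; group

theorem conjA_conjA_inv (n : ℕ) (g : HW n) (a : ↥(A n)) :
    conjA n g (conjA n g⁻¹ a) = a := by
  apply Subtype.ext; show g * (g⁻¹ * a.1 * g⁻¹⁻¹) * g⁻¹ = a.1; group

theorem conjA_congr (n : ℕ) {g g' : HW n}
    (h : (QuotientGroup.mk g : Wq n) = QuotientGroup.mk g') (a : ↥(A n)) :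
    conjA n g a = conjA n g' a := by
  have hb : g'⁻¹ * g ∈ A n := QuotientGroup.eq.mp h.symm
  apply Subtype.ext
  show g * a * g⁻¹ = g' * a * g'⁻¹
  have hcomm : Commute (g'⁻¹ * g) a.1 := A_comm n _ hb a.1 a.2
  have hfix : g'⁻¹ * g * a.1 * (g'⁻¹ * g)⁻¹ = a.1 := by
    rw [hcomm.eq]; group
  calc g * a.1 * g⁻¹
      = g' * (g'⁻¹ * g * a.1 * (g'⁻¹ * g)⁻¹) * g'⁻¹ := by group
    _ = g' * a.1 * g'⁻¹ := by rw [hfix]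

theorem conjA_map_mul (n : ℕ) (g : HW n) (a b : ↥(A n)) :
    conjA n g (a * b) = conjA n g a * conjA n g b := by
  apply Subtype.ext; show g * (a.1 * b.1) * g⁻¹ = (g * a.1 * g⁻¹) * (g * b.1 * g⁻¹); group

theorem conjA_map_inv (n : ℕ) (g : HW n) (a : ↥(A n)) :
    conjA n g a⁻¹ = (conjA n g a)⁻¹ := by
  apply Subtype.ext; show g * a.1⁻¹ * g⁻¹ = (g * a.1 * g⁻¹)⁻¹; group

theorem conjA_xsq (n : ℕ) (k m : Fin n) :
    conjA n (x n k) (xsq n m) = if k = m then xsq n m else (xsq n m)⁻¹ := by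
  by_cases h : k = m
  · subst h; simp only [if_pos rfl]
    apply Subtype.ext
    show x n k * x n k ^ 2 * (x n k)⁻¹ = x n k ^ 2; group
  · simp only [if_neg h]
    apply Subtype.ext
    show x n k * x n m ^ 2 * (x n k)⁻¹ = (x n m ^ 2)⁻¹
    have e2 : (x n k)⁻¹ * x n m ^ 2 * x n k = (x n m ^ 2)⁻¹ :=
      mul_eq_one_iff_eq_inv.mp (HW.relation n h)
    have h3 : x n m ^ 2 = x n k * (x n m ^ 2)⁻¹ * (x n k)⁻¹ := by
      rw [← e2]; group
    calc x n k * x n m ^ 2 * (x n k)⁻¹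
        = (x n k * (x n m ^ 2)⁻¹ * (x n k)⁻¹)⁻¹ := by group
      _ = (x n m ^ 2)⁻¹ := by rw [← h3]

/-- Conjugations by distinct generators commute as maps on `A n`. -/
theorem conjA_x_comm (n : ℕ) (i j : Fin n) (a : ↥(A n)) :
    conjA n (x n j) (conjA n (x n i) a) = conjA n (x n i) (conjA n (x n j) a) := by
  obtain ⟨a, ha⟩ := a
  revert ha
  refine fun ha => Subgroup.closure_induction
    (p := fun b hb => conjA n (x n j) (conjA n (x n i) ⟨b, hb⟩)
      = conjA n (x n i) (conjA n (x n j) ⟨b, hb⟩)) ?_ ?_ ?_ ?_ ha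
  · rintro b ⟨m, rfl⟩
    show conjA n (x n j) (conjA n (x n i) (xsq n m)) = conjA n (x n i) (conjA n (x n j) (xsq n m))
    rw [conjA_xsq, conjA_xsq]
    by_cases hi : i = m <;> by_cases hj : j = m <;>
      simp [hi, hj, conjA_xsq, conjA_map_inv]
  · have h1 : ∀ g : HW n, conjA n g (1 : ↥(A n)) = 1 := by
      intro g; apply Subtype.ext; show g * 1 * g⁻¹ = 1; group
    show conjA n (x n j) (conjA n (x n i) (1 : ↥(A n))) = conjA n (x n i) (conjA n (x n j) (1 : ↥(A n)))
    simp only [h1]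
  · intro b c hb hc ihb ihc
    show conjA n (x n j) (conjA n (x n i) (⟨b, hb⟩ * ⟨c, hc⟩))
      = conjA n (x n i) (conjA n (x n j) (⟨b, hb⟩ * ⟨c, hc⟩))
    rw [conjA_map_mul, conjA_map_mul, conjA_map_mul, conjA_map_mul, ihb, ihc]
  · intro b hb ihb
    show conjA n (x n j) (conjA n (x n i) (⟨b, hb⟩)⁻¹)
      = conjA n (x n i) (conjA n (x n j) (⟨b, hb⟩)⁻¹)
    rw [conjA_map_inv, conjA_map_inv, conjA_map_inv, conjA_map_inv, ihb]

/-- Automorphisms of `W_n` that do not change the conjugation action on `A_n`. -/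
def ActEq (n : ℕ) : Subgroup (MulAut (Wq n)) where
  carrier := {F | ∀ g g' : HW n, (QuotientGroup.mk g' : Wq n) = F (QuotientGroup.mk g) →
    ∀ a : ↥(A n), conjA n g' a = conjA n g a}
  one_mem' := by
    intro g g' h a
    rw [MulAut.one_apply] at h
    exact conjA_congr n h a
  mul_mem' := by
    intro F G hF hG g g' h a
    obtain ⟨g2, hg2⟩ := QuotientGroup.mk_surjective (G (QuotientGroup.mk g))
    rw [show (F * G : MulAut (Wq n)) (QuotientGroup.mk g) = F (G (QuotientGroup.mk g)) from rfl,
      ← hg2] at h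
    rw [hF g2 g' h a, hG g g2 hg2 a]
  inv_mem' := by
    intro F hF g g' h a
    have h2 : (QuotientGroup.mk g : Wq n) = F (QuotientGroup.mk g') := by
      rw [h, MulAut.apply_inv_self]
    exact (hF g' g h2 a).symm

theorem FRgens_subset_ActEq (n : ℕ) : FRgens n ⊆ (ActEq n : Set (MulAut (Wq n))) := by
  rintro F ⟨i, j, hij, hFi, hFk⟩
  -- the set of g for which the property holds is a subgroup of HW n
  let K : Subgroup (HW n) :=
    { carrier := {g | ∀ g' : HW n, (QuotientGroup.mk g' : Wq n) = F (QuotientGroup.mk g) →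
        ∀ a : ↥(A n), conjA n g' a = conjA n g a}
      one_mem' := by
        intro g' h a
        rw [show (QuotientGroup.mk (1 : HW n) : Wq n) = 1 from rfl, map_one] at h
        exact conjA_congr n h a
      mul_mem' := by
        intro g h hg hh g' he a
        obtain ⟨gg, hgg⟩ := QuotientGroup.mk_surjective (F (QuotientGroup.mk g))
        obtain ⟨hh2, hhh⟩ := QuotientGroup.mk_surjective (F (QuotientGroup.mk h))
        have he2 : (QuotientGroup.mk g' : Wq n) = QuotientGroup.mk (gg * hh2) := by
          rw [he, show (QuotientGroup.mk (g * h) : Wq n)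
            = QuotientGroup.mk g * QuotientGroup.mk h from rfl, map_mul, ← hgg, ← hhh]; rfl
        rw [conjA_congr n he2 a, conjA_mul, conjA_mul,
          hh hh2 hhh a, hg gg hgg (conjA n h a)]
      inv_mem' := by
        intro g hg g' he a
        obtain ⟨gg, hgg⟩ := QuotientGroup.mk_surjective (F (QuotientGroup.mk g))
        have he2 : (QuotientGroup.mk g' : Wq n) = QuotientGroup.mk gg⁻¹ := by
          rw [he, show (QuotientGroup.mk (g⁻¹ : HW n) : Wq n)
            = (QuotientGroup.mk g)⁻¹ from rfl, map_inv, ← hgg]; rfl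
        rw [conjA_congr n he2 a]
        have key : ∀ b : ↥(A n), conjA n gg b = conjA n g b := fun b => hg gg hgg b
        have : conjA n g (conjA n gg⁻¹ a) = a := by
          rw [← key, conjA_conjA_inv]
        calc conjA n gg⁻¹ a = conjA n g⁻¹ (conjA n g (conjA n gg⁻¹ a)) := by
              rw [conjA_inv_conjA]
          _ = conjA n g⁻¹ a := by rw [this] }
  -- generators of HW n lie in K
  have hgen : ∀ k : Fin n, PresentedGroup.of (rels := HWrels n) k ∈ K := by
    intro k
    intro g' he a
    have he' : (QuotientGroup.mk g' : Wq n) = F (xq n k) := he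
    show conjA n g' a = conjA n (x n k) a
    by_cases hk : k = i
    · subst hk
      rw [hFi] at he'
      have he2 : (QuotientGroup.mk g' : Wq n)
          = QuotientGroup.mk (x n j * x n k * (x n j)⁻¹) := by
        rw [he']; rfl
      rw [conjA_congr n he2 a, conjA_mul, conjA_mul,
        conjA_x_comm n k j (conjA n (x n j)⁻¹ a), conjA_conjA_inv]
    · rw [hFk k hk] at he'
      exact conjA_congr n he' a
  intro g g' he a
  exact (PresentedGroup.generated_by (HWrels n) K hgen g) g' he a

theorem FR_le_ActEq (n : ℕ) : FR n ≤ ActEq n :=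
  (Subgroup.closure_le _).mpr (FRgens_subset_ActEq n)

/-- The permutation endomorphism of `HW n` induced by `σ`. -/
def permHom (n : ℕ) (σ : Equiv.Perm (Fin n)) : HW n →* HW n :=
  PresentedGroup.toGroup (f := fun i => x n (σ i)) (by
    rintro r ⟨i, j, hij, rfl⟩
    simp only [map_mul, map_inv, map_pow, FreeGroup.lift_apply_of]
    have := HW.relation n (fun h : σ i = σ j => hij (σ.injective h))
    exact this)

theorem permHom_x (n : ℕ) (σ : Equiv.Perm (Fin n)) (i : Fin n) :
    permHom n σ (x n i) = x n (σ i) :=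
  PresentedGroup.toGroup.of _

theorem permHom_comp (n : ℕ) (σ τ : Equiv.Perm (Fin n)) :
    (permHom n σ).comp (permHom n τ) = permHom n (σ * τ) := by
  apply PresentedGroup.ext
  intro i
  show permHom n σ (permHom n τ (x n i)) = permHom n (σ * τ) (x n i)
  rw [permHom_x, permHom_x, permHom_x]
  rfl

theorem permHom_one (n : ℕ) : permHom n 1 = MonoidHom.id (HW n) := by
  apply PresentedGroup.ext
  intro i
  show permHom n 1 (x n i) = x n i
  rw [permHom_x]
  rfl

/-- The permutation automorphism of `HW n` induced by `σ`. -/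
def permAut (n : ℕ) (σ : Equiv.Perm (Fin n)) : MulAut (HW n) :=
  MonoidHom.toMulEquiv (permHom n σ) (permHom n σ⁻¹)
    (by rw [permHom_comp, inv_mul_cancel, permHom_one])
    (by rw [permHom_comp, mul_inv_cancel, permHom_one])

theorem permAut_maps_A (n : ℕ) (σ : Equiv.Perm (Fin n)) {a : HW n} (ha : a ∈ A n) :
    permHom n σ a ∈ A n := by
  refine Subgroup.closure_induction ?_ ?_ ?_ ?_ ha
  · rintro b ⟨i, rfl⟩
    rw [map_pow, permHom_x]
    exact Subgroup.subset_closure ⟨σ i, rfl⟩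
  · rw [map_one]; exact Subgroup.one_mem _
  · intro b c _ _ hb hc; rw [map_mul]; exact Subgroup.mul_mem _ hb hc
  · intro b _ hb; rw [map_inv]; exact Subgroup.inv_mem _ hb

/-- Restriction of `permAut` to `A n`. -/
def permAutA (n : ℕ) (σ : Equiv.Perm (Fin n)) : MulAut ↥(A n) where
  toFun a := ⟨permHom n σ a.1, permAut_maps_A n σ a.2⟩
  invFun a := ⟨permHom n σ⁻¹ a.1, permAut_maps_A n σ⁻¹ a.2⟩
  left_inv a := by
    apply Subtype.ext
    show permHom n σ⁻¹ (permHom n σ a.1) = a.1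
    rw [show permHom n σ⁻¹ (permHom n σ a.1)
      = ((permHom n σ⁻¹).comp (permHom n σ)) a.1 from rfl, permHom_comp,
      inv_mul_cancel, permHom_one]
    rfl
  right_inv a := by
    apply Subtype.ext
    show permHom n σ (permHom n σ⁻¹ a.1) = a.1
    rw [show permHom n σ (permHom n σ⁻¹ a.1)
      = ((permHom n σ).comp (permHom n σ⁻¹)) a.1 from rfl, permHom_comp,
      mul_inv_cancel, permHom_one]
    rfl
  map_mul' a b := by
    apply Subtype.ext
    show permHom n σ (a.1 * b.1) = permHom n σ a.1 * permHom n σ b.1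
    rw [map_mul]

/-- The automorphism of `Wq n` induced by `permAut`. -/
def permAutW (n : ℕ) (σ : Equiv.Perm (Fin n)) : MulAut (Wq n) where
  toFun := QuotientGroup.map (A n) (A n) (permHom n σ) (fun a ha => permAut_maps_A n σ ha)
  invFun := QuotientGroup.map (A n) (A n) (permHom n σ⁻¹) (fun a ha => permAut_maps_A n σ⁻¹ ha)
  left_inv w := by
    refine QuotientGroup.induction_on w fun g => ?_
    show QuotientGroup.mk (permHom n σ⁻¹ (permHom n σ g)) = QuotientGroup.mk g
    rw [show permHom n σ⁻¹ (permHom n σ g)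
      = ((permHom n σ⁻¹).comp (permHom n σ)) g from rfl, permHom_comp,
      inv_mul_cancel, permHom_one]
    rfl
  right_inv w := by
    refine QuotientGroup.induction_on w fun g => ?_
    show QuotientGroup.mk (permHom n σ (permHom n σ⁻¹ g)) = QuotientGroup.mk g
    rw [show permHom n σ (permHom n σ⁻¹ g)
      = ((permHom n σ).comp (permHom n σ⁻¹)) g from rfl, permHom_comp,
      mul_inv_cancel, permHom_one]
    rfl
  map_mul' a b := map_mul _ a b

theorem permAutW_mk (n : ℕ) (σ : Equiv.Perm (Fin n)) (g : HW n) :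
    permAutW n σ (QuotientGroup.mk g) = QuotientGroup.mk (permHom n σ g) := rfl

theorem permAutW_xq (n : ℕ) (σ : Equiv.Perm (Fin n)) (i : Fin n) :
    permAutW n σ (xq n i) = xq n (σ i) := by
  rw [show xq n i = QuotientGroup.mk (x n i) from rfl, permAutW_mk, permHom_x]
  rfl

/-- The pair `(α_σ|_A, ᾱ_σ)` is semi-linear. -/
theorem permPair_semilinear (n : ℕ) (σ : Equiv.Perm (Fin n)) :
    (permAutA n σ, permAutW n σ) ∈ AutS n := by
  intro g g' a h
  rw [permAutW_mk] at h
  show permAutA n σ (conjA n g a) = conjA n g' (permAutA n σ a)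
  rw [conjA_congr n h (permAutA n σ a)]
  apply Subtype.ext
  show permHom n σ (g * a.1 * g⁻¹) = permHom n σ g * permHom n σ a.1 * (permHom n σ g)⁻¹
  rw [map_mul, map_mul, map_inv]

/-- The section `Perm (Fin n) →* AutS n`. -/
def permSection (n : ℕ) : Equiv.Perm (Fin n) →* AutS n where
  toFun σ := ⟨(permAutA n σ, permAutW n σ), permPair_semilinear n σ⟩
  map_one' := by
    apply Subtype.ext
    apply Prod.ext
    · apply MulEquiv.ext
      intro a
      apply Subtype.ext
      show permHom n 1 a.1 = a.1
      rw [permHom_one]; rfl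
    · apply MulEquiv.ext
      intro w
      refine QuotientGroup.induction_on w fun g => ?_
      show QuotientGroup.mk (permHom n 1 g) = QuotientGroup.mk g
      rw [permHom_one]; rfl
  map_mul' σ τ := by
    apply Subtype.ext
    apply Prod.ext
    · apply MulEquiv.ext
      intro a
      apply Subtype.ext
      show permHom n (σ * τ) a.1 = permHom n σ (permHom n τ a.1)
      rw [← permHom_comp]; rfl
    · apply MulEquiv.ext
      intro w
      refine QuotientGroup.induction_on w fun g => ?_
      show QuotientGroup.mk (permHom n (σ * τ) g) = QuotientGroup.mk (permHom n σ (permHom n τ g))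
      rw [← permHom_comp]; rfl

/-- Proposition `structure-of-aut_s-w`: given the canonical epimorphism
`q : Aut(W_n) → S_n` (the one sending each permutation automorphism `ᾱ_σ` to `σ`) with
kernel `FR(W_n)`, the composition `Aut_S(A_n) → Aut(W_n) → S_n` is surjective, admits the
section `σ ↦ (α_σ|_{A_n}, ᾱ_σ)`, and its kernel is exactly
`{(f, F) : f ∈ Aut_W(A_n), F ∈ FR(W_n)} ≅ Aut_W(A_n) × FR(W_n)`; i.e. there is a split
short exact sequence `1 → Aut_W(A_n) × FR(W_n) → Aut_S(A_n) → S_n → 1`. -/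
theorem stmt15 (n : ℕ) (q : MulAut (Wq n) →* Equiv.Perm (Fin n))
    (hq : ∀ (F : MulAut (Wq n)) (σ : Equiv.Perm (Fin n)),
      (∀ i, F (xq n i) = xq n (σ i)) → q F = σ)
    (hker : q.ker = FR n) :
    Function.Surjective (q.comp (projW n)) ∧
    (∀ p : AutS n, p ∈ (q.comp (projW n)).ker ↔
      ((p : MulAut ↥(A n) × MulAut (Wq n)).1 ∈ AutW n ∧
        (p : MulAut ↥(A n) × MulAut (Wq n)).2 ∈ FR n)) ∧
    Nonempty ((q.comp (projW n)).ker ≃* (AutW n × FR n)) ∧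
    ∃ s : Equiv.Perm (Fin n) →* AutS n,
      (q.comp (projW n)).comp s = MonoidHom.id _ ∧
      ∀ (σ : Equiv.Perm (Fin n)) (i : Fin n),
        ((s σ : MulAut ↥(A n) × MulAut (Wq n)).2 (xq n i) = xq n (σ i)) ∧
        ((s σ : MulAut ↥(A n) × MulAut (Wq n)).1 (xsq n i) = xsq n (σ i)) := by

  classical
  set P : AutS n →* Equiv.Perm (Fin n) := q.comp (projW n) with hP
  have hPapply : ∀ p : AutS n, P p = q (p : MulAut ↥(A n) × MulAut (Wq n)).2 := fun p => rfl
  have hsec : ∀ σ : Equiv.Perm (Fin n), P (permSection n σ) = σ := by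
    intro σ
    rw [hPapply]
    exact hq _ σ (fun i => permAutW_xq n σ i)
  have hkerchar : ∀ p : AutS n, p ∈ P.ker ↔
      ((p : MulAut ↥(A n) × MulAut (Wq n)).1 ∈ AutW n ∧
        (p : MulAut ↥(A n) × MulAut (Wq n)).2 ∈ FR n) := by
    intro p
    have h0 : p ∈ P.ker ↔ (p : MulAut ↥(A n) × MulAut (Wq n)).2 ∈ FR n := by
      rw [← hker, MonoidHom.mem_ker, MonoidHom.mem_ker, hPapply]
    rw [h0]
    constructor
    · intro hFR
      refine ⟨?_, hFR⟩
      intro g a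
      obtain ⟨g', hg'⟩ := QuotientGroup.mk_surjective
        ((p : MulAut ↥(A n) × MulAut (Wq n)).2 (QuotientGroup.mk g))
      exact (p.2 g g' a hg').trans (FR_le_ActEq n hFR g g' hg' _)
    · exact fun h => h.2
  have hSL : ∀ fF : ↥(AutW n) × ↥(FR n),
      ((fF.1.1, fF.2.1) : MulAut ↥(A n) × MulAut (Wq n)) ∈ AutS n := by
    intro fF g g' a h
    show fF.1.1 (conjA n g a) = conjA n g' (fF.1.1 a)
    rw [fF.1.2 g a, FR_le_ActEq n fF.2.2 g g' h (fF.1.1 a)]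
  refine ⟨fun σ => ⟨permSection n σ, hsec σ⟩, hkerchar, ?_, ?_⟩
  · exact ⟨MulEquiv.mk
      (Equiv.mk
        (fun p => (⟨(p.1 : MulAut ↥(A n) × MulAut (Wq n)).1, ((hkerchar p.1).mp p.2).1⟩,
          ⟨(p.1 : MulAut ↥(A n) × MulAut (Wq n)).2, ((hkerchar p.1).mp p.2).2⟩))
        (fun fF => ⟨⟨(fF.1.1, fF.2.1), hSL fF⟩, (hkerchar _).mpr ⟨fF.1.2, fF.2.2⟩⟩)
        (fun p => rfl) (fun fF => rfl))
      (fun p q' => rfl)⟩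
  · refine ⟨permSection n, MonoidHom.ext hsec, ?_⟩
    intro σ i
    refine ⟨permAutW_xq n σ i, ?_⟩
    apply Subtype.ext
    show permHom n σ (x n i ^ 2) = x n (σ i) ^ 2
    rw [map_pow, permHom_x]
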